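/- With K, η, W as in the Schaeffer-matrix construction: for all n ≥ 0, T^n = P W^n |_H, where P is the orthogonal projection of K onto H. Moreover η(a)H ⊆ H and η(a)|H = π(a). -/

import Mathlib

/-!
Totality of the ranges of `e` and the `u n` means that an operator `X` into `K` is determined by
its compressions `e† X` and `(u n)† X`; in particular `X = e e† X` as soon as all `(u n)† X`
vanish. Since the only nonzero entry in the first column of `η a` is `π a`, and the only nonzero
entry in the first row of `W` is `T`, this gives `η a e = e π a` and
`e† W = T e†`; iterating the latter, `e† Wⁿ e = Tⁿ e† e = Tⁿ`.
-/

open ContinuousLinearMap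

section

variable {E F K V : Type*}
  [NormedAddCommGroup E] [InnerProductSpace ℂ E] [CompleteSpace E]
  [NormedAddCommGroup F] [InnerProductSpace ℂ F] [CompleteSpace F]
  [NormedAddCommGroup K] [InnerProductSpace ℂ K] [CompleteSpace K]
  [NormedAddCommGroup V] [NormedSpace ℂ V]

theorem ContinuousLinearMap.adjoint_comp_eq_zero_comm (f : E →L[ℂ] K) (g : F →L[ℂ] K) :
    adjoint f ∘L g = 0 ↔ adjoint g ∘L f = 0 := by
  constructor <;> intro h <;> simpa using congrArg adjoint h

theorem ContinuousLinearMap.ext_of_adjoint_comp_of_dense_range_sup {ι : Type*}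
    (e : E →L[ℂ] K) (u : ι → (F →L[ℂ] K))
    (htotal : (LinearMap.range (e : E →ₗ[ℂ] K) ⊔
      ⨆ i, LinearMap.range (u i : F →ₗ[ℂ] K)).topologicalClosure = ⊤)
    {X Y : V →L[ℂ] K} (he : adjoint e ∘L X = adjoint e ∘L Y)
    (hu : ∀ i, adjoint (u i) ∘L X = adjoint (u i) ∘L Y) : X = Y := by
  ext v
  rw [← sub_eq_zero]
  have hmem : X v - Y v ∈ (LinearMap.range (e : E →ₗ[ℂ] K) ⊔
      ⨆ i, LinearMap.range (u i : F →ₗ[ℂ] K))ᗮ := by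
    rw [← Submodule.inf_orthogonal, ← Submodule.iInf_orthogonal]
    refine ⟨?_, Submodule.mem_iInf _ |>.mpr fun i ↦ ?_⟩
    · rw [orthogonal_range]
      simpa [sub_eq_zero] using congrArg (· v) he
    · rw [orthogonal_range]
      simpa [sub_eq_zero] using congrArg (· v) (hu i)
  rwa [← Submodule.orthogonal_closure, htotal, Submodule.top_orthogonal_eq_bot,
    Submodule.mem_bot] at hmem

theorem ContinuousLinearMap.eq_comp_adjoint_comp_of_dense_range_sup {ι : Type*}
    (e : E →L[ℂ] K) (u : ι → (F →L[ℂ] K))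
    (htotal : (LinearMap.range (e : E →ₗ[ℂ] K) ⊔
      ⨆ i, LinearMap.range (u i : F →ₗ[ℂ] K)).topologicalClosure = ⊤)
    (he : adjoint e ∘L e = 1) (hue : ∀ i, adjoint e ∘L u i = 0)
    {X : V →L[ℂ] K} (hX : ∀ i, adjoint (u i) ∘L X = 0) : X = e ∘L (adjoint e ∘L X) := by
  refine ext_of_adjoint_comp_of_dense_range_sup e u htotal ?_ fun i ↦ ?_
  · rw [← comp_assoc, he, one_def, id_comp]
  · rw [hX, ← comp_assoc, (adjoint_comp_eq_zero_comm e (u i)).mp (hue i), zero_comp]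

end

theorem ContinuousLinearMap.comp_pow_eq_pow_comp {R M N : Type*} [Semiring R]
    [TopologicalSpace M] [AddCommMonoid M] [Module R M]
    [TopologicalSpace N] [AddCommMonoid N] [Module R N]
    {P : M →L[R] N} {W : M →L[R] M} {T : N →L[R] N} (h : P ∘L W = T ∘L P) (n : ℕ) :
    P ∘L (W ^ n) = (T ^ n) ∘L P := by
  induction n with
  | zero => rfl
  | succ n ih =>
    calc P ∘L (W ^ (n + 1)) = (P ∘L (W ^ n)) ∘L W := by rw [pow_succ, mul_def, comp_assoc]
      _ = (T ^ n) ∘L (P ∘L W) := by rw [ih, comp_assoc]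
      _ = (T ^ (n + 1)) ∘L P := by rw [h, ← comp_assoc, ← mul_def, ← pow_succ]

theorem schaeffer_dilation_compression
    {A : Type*} [CStarAlgebra A]
    {H : Type*} [NormedAddCommGroup H] [InnerProductSpace ℂ H] [CompleteSpace H]
    {K : Type*} [NormedAddCommGroup K] [InnerProductSpace ℂ K] [CompleteSpace K]
    (π : A →⋆ₐ[ℂ] (H →L[ℂ] H))
    (T : H →L[ℂ] H)
    -- the defect operator `Δ` and defect space `D`:
    (D : Submodule ℂ H) [CompleteSpace D]
    -- `K = H ⊕ D ⊕ D ⊕ ⋯`, internally: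
    (e : H →L[ℂ] K) (u : ℕ → (D →L[ℂ] K))
    (he : adjoint e ∘L e = 1)
    (heu : ∀ n, adjoint e ∘L u n = 0)
    (htotal : (LinearMap.range (e : H →ₗ[ℂ] K) ⊔ ⨆ n, LinearMap.range (u n : D →ₗ[ℂ] K)).topologicalClosure = ⊤)
    -- the matrix entries of `W`:
    (W : K →L[ℂ] K)
    (hW00 : adjoint e ∘L W ∘L e = T)
    (hW0n : ∀ n, adjoint e ∘L W ∘L u n = 0)
    -- the matrix entries of `η`:
    (η : A → (K →L[ℂ] K))
    (hη00 : ∀ a, adjoint e ∘L η a ∘L e = π a)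
    (hηue : ∀ a n, adjoint (u n) ∘L η a ∘L e = 0)
    :
    (∀ a : A, η a ∘L e = e ∘L π a) ∧ ∀ n : ℕ, T ^ n = adjoint e ∘L (W ^ n) ∘L e := by
  have hWe : adjoint W ∘L e = e ∘L adjoint T := by
    refine (eq_comp_adjoint_comp_of_dense_range_sup e u htotal he heu fun n ↦ ?_).trans ?_
    · simpa only [adjoint_comp, adjoint_adjoint, comp_assoc, map_zero] using
        congrArg adjoint (hW0n n)
    · rw [← hW00]
      simp only [adjoint_comp, adjoint_adjoint, comp_assoc]
  have heW : adjoint e ∘L W = T ∘L adjoint e := by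
    simpa only [adjoint_comp, adjoint_adjoint] using congrArg adjoint hWe
  refine ⟨fun a ↦ ?_, fun n ↦ ?_⟩
  · rw [eq_comp_adjoint_comp_of_dense_range_sup e u htotal he heu (hηue a), ← hη00 a]
  · rw [← comp_assoc, comp_pow_eq_pow_comp heW, comp_assoc, he, one_def, comp_id]
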